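/- Let P > 0 and let λ, k, γ, ν, Ĉ, D̂ be real numbers with γ ≠ 0 and λk² ≠ 0. Suppose u : ℝ → ℝ is twice continuously differentiable, periodic with period 2P, and satisfies for all θ ∈ ℝ both λk²u''(θ) = (γ/3)u(θ)³ − (ν/2)u(θ)² + Ĉ and (λk²/2)u'(θ)² = (γ/12)u(θ)⁴ − (ν/6)u(θ)³ + Ĉu(θ) + D̂. Let α₁ = ⟨u⟩ and α₂ = ⟨u²⟩. Then ⟨u(u')²⟩ = (γ/(6λk²)) ( α₂(9Ĉ/(2γ) − 5ν³/(8γ³)) + α₁(6D̂/γ + 3νĈ/(2γ²)) + 5ν²Ĉ/(4γ³) + νD̂/γ² ), where ⟨f⟩ = (1/(2P))∫₀^{2P} f(θ)dθ. -/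

import Mathlib

/-!
Write `L = λk²` and `M j = ∫₀^{2P} u^j`. Multiplying the second-order equation by `u^n` and
integrating by parts (the boundary term vanishes by periodicity) gives
`L ∫ u^n u'' = -n L ∫ u^(n-1) u'²`, and the first integral evaluates the right-hand side in
moments. This yields the recursion
`γ (n+2) M (n+3) - ν (2n+3) M (n+2) + 6C (2n+1) M n + 12 n D M (n-1) = 0`.
By the first integral, `(L/2) ∫ u u'²` is a combination of `M 5, M 4, M 2, M 1`, and the
recursion at `n = 2, 1, 0` eliminates `M 5, M 4, M 3` in favour of `M 2, M 1, M 0 = 2P`.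
-/

open intervalIntegral

theorem Function.Periodic.deriv {u : ℝ → ℝ} {T : ℝ} (h : Function.Periodic u T) :
    Function.Periodic (deriv u) T := fun x => by
  rw [← deriv_comp_add_const u T x, funext h]

theorem Function.Periodic.integral_deriv_eq_zero {E : Type*} [NormedAddCommGroup E]
    [NormedSpace ℝ E] [CompleteSpace E] {g g' : ℝ → E} {T : ℝ} (hper : Function.Periodic g T)
    (hg : ∀ x, HasDerivAt g (g' x) x) (hg' : IntervalIntegrable g' MeasureTheory.volume 0 T) :
    ∫ x in 0..T, g' x = 0 := by
  rw [integral_eq_sub_of_hasDerivAt (fun x _ => hg x) hg', sub_eq_zero]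
  simpa using hper 0

theorem integral_pow_mul_iteratedDeriv_two_of_periodic {u : ℝ → ℝ} {T : ℝ}
    (hu : ContDiff ℝ 2 u) (hper : Function.Periodic u T) (n : ℕ) :
    ∫ θ in 0..T, u θ ^ n * iteratedDeriv 2 u θ
      = -n * ∫ θ in 0..T, u θ ^ (n - 1) * deriv u θ ^ 2 := by
  have hu' : ContDiff ℝ 1 (deriv u) :=
    (contDiff_succ_iff_deriv.mp (by exact_mod_cast hu : ContDiff ℝ (1 + 1) u)).2.2
  have hc : Continuous u := hu.continuous
  have hc' : Continuous (deriv u) := hu'.continuous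
  have hc'' : Continuous (iteratedDeriv 2 u) := hu.continuous_iteratedDeriv 2 le_rfl
  have hderiv : ∀ θ, HasDerivAt (fun θ => u θ ^ n * deriv u θ)
      (n * (u θ ^ (n - 1) * deriv u θ ^ 2) + u θ ^ n * iteratedDeriv 2 u θ) θ := by
    intro θ
    rw [iteratedDeriv_succ, iteratedDeriv_one]
    refine (((hu.differentiable two_ne_zero θ).hasDerivAt.pow n).mul
      (hu'.differentiable one_ne_zero θ).hasDerivAt).congr_deriv ?_
    simp only [Pi.pow_apply]
    ring
  have hperiodic : Function.Periodic (fun θ => u θ ^ n * deriv u θ) T := fun θ => by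
    simp only [hper θ, hper.deriv θ]
  have hzero := hperiodic.integral_deriv_eq_zero hderiv
    ((by fun_prop : Continuous _).intervalIntegrable 0 T)
  rw [integral_add ((by fun_prop : Continuous _).intervalIntegrable 0 T)
    ((by fun_prop : Continuous _).intervalIntegrable 0 T), integral_const_mul] at hzero
  linear_combination hzero

section Gardner

variable {u : ℝ → ℝ} {T L γ ν C D : ℝ}

theorem integral_pow_mul_iteratedDeriv_two_of_gardner (hu : Continuous u)
    (heq1 : ∀ θ, L * iteratedDeriv 2 u θ = (γ / 3) * u θ ^ 3 - (ν / 2) * u θ ^ 2 + C) (n : ℕ) :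
    L * ∫ θ in 0..T, u θ ^ n * iteratedDeriv 2 u θ
      = (γ / 3) * (∫ θ in 0..T, u θ ^ (n + 3)) - (ν / 2) * (∫ θ in 0..T, u θ ^ (n + 2))
        + C * ∫ θ in 0..T, u θ ^ n := by
  rw [← integral_const_mul]
  calc ∫ θ in 0..T, L * (u θ ^ n * iteratedDeriv 2 u θ)
      = ∫ θ in 0..T, ((γ / 3) * u θ ^ (n + 3) - (ν / 2) * u θ ^ (n + 2) + C * u θ ^ n) :=
        integral_congr fun θ _ => by linear_combination u θ ^ n * heq1 θ
    _ = _ := by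
      rw [integral_add, integral_sub, integral_const_mul, integral_const_mul, integral_const_mul]
      all_goals exact (by fun_prop : Continuous _).intervalIntegrable 0 T

theorem integral_pow_mul_deriv_sq_of_gardner (hu : Continuous u)
    (heq2 : ∀ θ, (L / 2) * deriv u θ ^ 2
      = (γ / 12) * u θ ^ 4 - (ν / 6) * u θ ^ 3 + C * u θ + D) (n : ℕ) :
    (L / 2) * ∫ θ in 0..T, u θ ^ n * deriv u θ ^ 2
      = (γ / 12) * (∫ θ in 0..T, u θ ^ (n + 4)) - (ν / 6) * (∫ θ in 0..T, u θ ^ (n + 3))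
        + C * (∫ θ in 0..T, u θ ^ (n + 1)) + D * ∫ θ in 0..T, u θ ^ n := by
  rw [← integral_const_mul]
  calc ∫ θ in 0..T, L / 2 * (u θ ^ n * deriv u θ ^ 2)
      = ∫ θ in 0..T, ((γ / 12) * u θ ^ (n + 4) - (ν / 6) * u θ ^ (n + 3)
          + C * u θ ^ (n + 1) + D * u θ ^ n) :=
        integral_congr fun θ _ => by linear_combination u θ ^ n * heq2 θ
    _ = _ := by
      rw [integral_add, integral_add, integral_sub, integral_const_mul, integral_const_mul,
        integral_const_mul, integral_const_mul]
      all_goals exact (by fun_prop : Continuous _).intervalIntegrable 0 T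

theorem gardner_moment_recursion (hu : ContDiff ℝ 2 u) (hper : Function.Periodic u T)
    (heq1 : ∀ θ, L * iteratedDeriv 2 u θ = (γ / 3) * u θ ^ 3 - (ν / 2) * u θ ^ 2 + C)
    (heq2 : ∀ θ, (L / 2) * deriv u θ ^ 2
      = (γ / 12) * u θ ^ 4 - (ν / 6) * u θ ^ 3 + C * u θ + D) (n : ℕ) :
    γ * (n + 2) * (∫ θ in 0..T, u θ ^ (n + 3)) - ν * (2 * n + 3) * (∫ θ in 0..T, u θ ^ (n + 2))
      + 6 * C * (2 * n + 1) * (∫ θ in 0..T, u θ ^ n)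
      + 12 * n * D * (∫ θ in 0..T, u θ ^ (n - 1)) = 0 := by
  have hsecond := integral_pow_mul_iteratedDeriv_two_of_gardner (T := T) hu.continuous heq1 n
  have hparts := integral_pow_mul_iteratedDeriv_two_of_periodic hu hper n
  cases n with
  | zero =>
    push_cast at hsecond hparts ⊢
    linear_combination -6 * hsecond + 6 * L * hparts
  | succ m =>
    have hfirst := integral_pow_mul_deriv_sq_of_gardner (T := T) hu.continuous heq2 m
    simp only [Nat.add_sub_cancel] at hparts ⊢
    push_cast at hsecond hparts hfirst ⊢
    linear_combination -6 * hsecond + 6 * L * hparts - 12 * (m + 1) * hfirst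

end Gardner

/-- Evaluation of `⟨u(u')²⟩` (the integral `Ĩ₂`) in terms of `α₁ = ⟨u⟩`,
`α₂ = ⟨u²⟩` and the integration constants of the steady Gardner equation. -/
theorem moment_I2
    (P lam k γ ν C D : ℝ) (hP : 0 < P) (hγ : γ ≠ 0) (hlk : lam * k ^ 2 ≠ 0)
    (u : ℝ → ℝ) (hu : ContDiff ℝ 2 u)
    (hper : Function.Periodic u (2 * P))
    (heq1 : ∀ θ : ℝ, lam * k ^ 2 * iteratedDeriv 2 u θ
      = (γ / 3) * (u θ) ^ 3 - (ν / 2) * (u θ) ^ 2 + C)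
    (heq2 : ∀ θ : ℝ, (lam * k ^ 2 / 2) * (deriv u θ) ^ 2
      = (γ / 12) * (u θ) ^ 4 - (ν / 6) * (u θ) ^ 3 + C * u θ + D)
    (α₁ α₂ : ℝ)
    (hα₁ : α₁ = (1 / (2 * P)) * ∫ θ in (0:ℝ)..(2 * P), u θ)
    (hα₂ : α₂ = (1 / (2 * P)) * ∫ θ in (0:ℝ)..(2 * P), (u θ) ^ 2) :
    (1 / (2 * P)) * ∫ θ in (0:ℝ)..(2 * P), u θ * (deriv u θ) ^ 2
      = (γ / (6 * lam * k ^ 2)) *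
          (α₂ * (9 * C / (2 * γ) - 5 * ν ^ 3 / (8 * γ ^ 3))
           + α₁ * (6 * D / γ + 3 * ν * C / (2 * γ ^ 2))
           + 5 * ν ^ 2 * C / (4 * γ ^ 3) + ν * D / γ ^ 2) := by
  have r0 := gardner_moment_recursion hu hper heq1 heq2 0
  have r1 := gardner_moment_recursion hu hper heq1 heq2 1
  have r2 := gardner_moment_recursion hu hper heq1 heq2 2
  have hI := integral_pow_mul_deriv_sq_of_gardner (T := 2 * P) hu.continuous heq2 1
  norm_num at r0 r1 r2 hI
  have hreduced : 288 * γ ^ 2 * (lam * k ^ 2 / 2 * ∫ θ in (0:ℝ)..(2 * P), u θ * deriv u θ ^ 2)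
      = (108 * C * γ ^ 2 - 15 * ν ^ 3) * (∫ θ in (0:ℝ)..(2 * P), u θ ^ 2)
        + (144 * D * γ ^ 2 + 36 * ν * C * γ) * (∫ θ in (0:ℝ)..(2 * P), u θ)
        + (24 * ν * D * γ + 30 * ν ^ 2 * C) * (2 * P) := by
    linear_combination 288 * γ ^ 2 * hI + 6 * γ ^ 2 * r2 - 2 * γ * ν * r1 - 5 * ν ^ 2 * r0
  subst hα₁ hα₂
  have hP' : P ≠ 0 := hP.ne'
  field_simp
  rw [eq_div_iff hlk]
  linear_combination 8 / 3 * hreduced
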